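/- arXiv:1502.02623 — 2 statements merged into one kernel-verified Lean document; each statement's English description precedes it below -/
import Mathlib

section
/- Let Π = (P, 𝓛) be a finite projective plane of order n, let m ≥ 1, and let v : P → ℤ/mℤ be a line-invariant function. Then n·v(a) = n·v(b) for all points a, b ∈ P; i.e., the value n·v(x) ∈ ℤ/mℤ is independent of the point x. -/
open Configuration

/-- The sum of `v` over the points of the line `l`. -/
noncomputable def lineSum {P L G : Type*} [Membership P L] [AddCommMonoid G]
    (v : P → G) (l : L) : G :=
  ∑ᶠ x ∈ {x : P | x ∈ l}, v x

/-- `v : P → G` is line invariant if its sum along every line of `L` is the same. -/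
def LineInvariant (P L : Type*) {G : Type*} [Membership P L] [AddCommMonoid G]
    (v : P → G) : Prop :=
  ∀ l l' : L, lineSum v l = lineSum v l'

open Finset

section

open scoped Classical

variable {P L : Type*} [Membership P L]

theorem lineSum_eq_sum_filter [Fintype P] {G : Type*} [AddCommMonoid G] (v : P → G) (l : L) :
    lineSum v l = ∑ x with x ∈ l, v x := by
  rw [lineSum, ← finsum_mem_coe_finset]
  simp only [coe_filter, mem_univ, true_and]

namespace Configuration

theorem HasLines.card_lines_through_pair [HasLines P L] [Fintype L] {a x : P} (hxa : x ≠ a) :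
    #{l : L | a ∈ l ∧ x ∈ l} = 1 := by
  refine card_eq_one.mpr ⟨mkLine hxa.symm, ?_⟩
  have hmk := mkLine_ax (L := L) hxa.symm
  ext l
  simp only [mem_filter, mem_univ, true_and, mem_singleton]
  refine ⟨fun ⟨ha, hx⟩ => ?_, fun hl => hl ▸ hmk⟩
  exact (Nondegenerate.eq_or_eq ha hx hmk.1 hmk.2).resolve_left hxa.symm

namespace ProjectivePlane

variable [ProjectivePlane P L]

theorem card_lines_through [Finite P] [Fintype L] (a : P) :
    #{l : L | a ∈ l} = order P L + 1 := by
  rw [← lineCount_eq L a, lineCount, Nat.card_eq_fintype_card, Fintype.card_subtype]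

/-- Every point `x ≠ a` lies on exactly one line through `a`, while `a` lies on all `order + 1`
of them. -/
theorem sum_lineSum_lines_through [Fintype P] [Fintype L] {G : Type*} [AddCommMonoid G]
    (v : P → G) (a : P) :
    ∑ l : L with a ∈ l, lineSum v l = order P L • v a + ∑ x, v x := by
  calc ∑ l : L with a ∈ l, lineSum v l
      = ∑ l with a ∈ l, ∑ x with x ∈ l, v x := sum_congr rfl fun l _ => lineSum_eq_sum_filter v l
    _ = ∑ x, ∑ l with a ∈ l ∧ x ∈ l, v x := sum_comm' (by simp)
    _ = ∑ x, #{l : L | a ∈ l ∧ x ∈ l} • v x := by simp only [sum_const]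
    _ = (order P L + 1) • v a + ∑ x ∈ {a}ᶜ, v x := by
      rw [Fintype.sum_eq_add_sum_compl a]
      congr 1
      · simp only [and_self, card_lines_through]
      · refine sum_congr rfl fun x hx => ?_
        rw [HasLines.card_lines_through_pair (by simpa using hx), one_nsmul]
    _ = order P L • v a + ∑ x, v x := by
      rw [Fintype.sum_eq_add_sum_compl a v, succ_nsmul, add_assoc]

end ProjectivePlane

end Configuration

open Configuration.ProjectivePlane in
theorem LineInvariant.order_nsmul_eq [ProjectivePlane P L] [Fintype P] [Fintype L]
    {G : Type*} [AddCancelCommMonoid G] {v : P → G} (hv : LineInvariant P L v) (a b : P) :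
    order P L • v a = order P L • v b := by
  obtain ⟨-, -, -, l₀, -⟩ := exists_config (P := P) (L := L)
  have hsum (p : P) : order P L • v p + ∑ x, v x = (order P L + 1) • lineSum v l₀ := by
    rw [← sum_lineSum_lines_through, sum_congr rfl fun l _ => hv l l₀, sum_const,
      card_lines_through]
  exact add_right_cancel ((hsum a).trans (hsum b).symm)

end

theorem stmt_6_general {P L : Type*} [Membership P L] [Fintype P] [Fintype L]
    [ProjectivePlane P L] {n : ℕ} (hn : ProjectivePlane.order P L = n)
    (m : ℕ) (v : P → ZMod m) (hv : LineInvariant P L v) :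
    ∀ a b : P, n • v a = n • v b :=
  hn ▸ hv.order_nsmul_eq

/-- For any line-invariant `v : P → ℤ/mℤ` on a projective plane of order `n`,
the value `n • v x` is independent of the point `x`. -/
theorem stmt_6 {P L : Type*} [Membership P L] [Fintype P] [Fintype L]
    [ProjectivePlane P L] {n : ℕ} (hn : ProjectivePlane.order P L = n)
    (m : ℕ) (hm : 1 ≤ m) (v : P → ZMod m) (hv : LineInvariant P L v) :
    ∀ a b : P, n • v a = n • v b :=
  stmt_6_general hn m v hv
end

section
/- Let Π = (P, 𝓛) be a finite projective plane of order n and let A be its incidence matrix over ℝ (rows indexed by lines, columns by points, with A_{L,x} = 1 if x ∈ L and 0 otherwise). Then A is invertible. -/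
open Configuration

open scoped Classical in
/-- The incidence matrix of a plane, with rows indexed by lines and columns by points:
the entry at `(l, x)` is `1` if `x ∈ l` and `0` otherwise. -/
noncomputable def incidenceMatrix (P L : Type*) [Membership P L] : Matrix L P ℝ :=
  Matrix.of fun l x => if x ∈ l then 1 else 0

/-!
Writing `A` for the incidence matrix, `n` for the order and `J` for the all-ones matrix,
any two distinct lines meet in exactly one point and every line has `n + 1` points, so
`A Aᵀ = n I + J`. This matrix is positive definite since `n > 0` and `J = 𝟙 𝟙ᵀ`, hence
invertible; so `A` has a right inverse, which is two-sided because `A` is square.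
-/

open Matrix

theorem Matrix.exists_inverse_of_isUnit_mul {R m n : Type*} [CommRing R] [Fintype m]
    [Fintype n] [DecidableEq m] [DecidableEq n] (e : m ≃ n) {A : Matrix m n R}
    {C : Matrix n m R} (h : IsUnit (A * C)) : ∃ B : Matrix n m R, A * B = 1 ∧ B * A = 1 := by
  obtain ⟨u, hu⟩ := h
  have hright : A * (C * (↑u⁻¹ : Matrix m m R)) = 1 := by
    rw [← Matrix.mul_assoc, ← hu, Units.mul_inv]
  exact ⟨C * (↑u⁻¹ : Matrix m m R), hright, (mul_eq_one_comm_of_equiv e).mp hright⟩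

theorem Matrix.posDef_smul_one_add_ones {n : Type*} [Fintype n] [DecidableEq n] {c : ℝ}
    (hc : 0 < c) : (c • (1 : Matrix n n ℝ) + of fun _ _ => 1).PosDef := by
  have hJ : (of fun _ _ => 1 : Matrix n n ℝ) = vecMulVec 1 (star 1) := by
    ext; simp [vecMulVec]
  rw [hJ]
  exact (PosDef.one.smul hc).add_posSemidef (posSemidef_vecMulVec_self_star 1)

theorem incidenceMatrix_mul_transpose_apply {P L : Type*} [Membership P L] [Fintype P]
    (l l' : L) :
    (incidenceMatrix P L * (incidenceMatrix P L)ᵀ) l l' = Nat.card {x : P // x ∈ l ∧ x ∈ l'} := by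
  classical
  rw [Nat.card_eq_fintype_card, Fintype.card_subtype, Finset.card_filter, Nat.cast_sum]
  refine Finset.sum_congr rfl fun x _ => ?_
  by_cases h : x ∈ l <;> by_cases h' : x ∈ l' <;> simp [incidenceMatrix, h, h']

namespace Configuration.ProjectivePlane

theorem card_inter_of_ne (P : Type*) {L : Type*} [Membership P L] [ProjectivePlane P L]
    {l l' : L} (h : l ≠ l') : Nat.card {x : P // x ∈ l ∧ x ∈ l'} = 1 := by
  obtain ⟨p, hp, hu⟩ := HasPoints.existsUnique_point P L l l' h
  exact Nat.card_eq_one_iff_exists.mpr ⟨⟨p, hp⟩, fun x => Subtype.ext (hu x x.2)⟩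

end Configuration.ProjectivePlane

theorem incidenceMatrix_mul_transpose {P L : Type*} [Membership P L] [Fintype P] [Fintype L]
    [DecidableEq L] [ProjectivePlane P L] :
    incidenceMatrix P L * (incidenceMatrix P L)ᵀ =
      (ProjectivePlane.order P L : ℝ) • (1 : Matrix L L ℝ) + of fun _ _ => 1 := by
  ext l l'
  rw [incidenceMatrix_mul_transpose_apply]
  rcases eq_or_ne l l' with rfl | h
  · simpa [pointCount] using congrArg (Nat.cast (R := ℝ)) (ProjectivePlane.pointCount_eq P l)
  · simp [ProjectivePlane.card_inter_of_ne P h, h]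

/-- The incidence matrix of a finite projective plane is invertible (over `ℝ`). -/
theorem stmt_16 {P L : Type*} [Membership P L] [Fintype P] [Fintype L]
    [DecidableEq P] [DecidableEq L] [ProjectivePlane P L] :
    ∃ B : Matrix P L ℝ,
      incidenceMatrix P L * B = 1 ∧ B * incidenceMatrix P L = 1 := by
  have horder : (0 : ℝ) < ProjectivePlane.order P L := by
    exact_mod_cast (ProjectivePlane.one_lt_order P L).trans' zero_lt_one
  have hunit : IsUnit (incidenceMatrix P L * (incidenceMatrix P L)ᵀ) := by
    rw [incidenceMatrix_mul_transpose]
    exact (posDef_smul_one_add_ones horder).isUnit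
  exact exists_inverse_of_isUnit_mul
    (Fintype.equivOfCardEq (ProjectivePlane.card_points_eq_card_lines P L)).symm hunit
end
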